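/- arXiv:1911.11083 — 4 statements merged into one kernel-verified Lean document; each statement's English description precedes it below -/
import Mathlib

section
/- Let A ∈ ℂ^(k×k) with ‖A − 1_k‖ < 1/k (Frobenius norm), and for z = (z₁,…,z_k) let w = Az with components w_r(z) = ∑_ℓ a_{r,ℓ} z_ℓ. Then 1/det(A) = (1/(2πi))^k ∮_{|z₁|=1} ⋯ ∮_{|z_k|=1} dz₁⋯dz_k / (w₁(z)⋯w_k(z)). -/
open Finset Real Complex

/-- Frobenius norm of a complex matrix. -/
noncomputable def frobNorm {k : ℕ} (M : Matrix (Fin k) (Fin k) ℂ) : ℝ :=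
  Real.sqrt (∑ r, ∑ l, ‖M r l‖ ^ 2)

section Aux

open Set MeasureTheory Function

noncomputable section

namespace StmtAux

variable {n : ℕ} {E : Type*} [NormedAddCommGroup E] [NormedSpace ℂ E]

theorem torusIntegral_comm
    {f : (Fin (n+1) → ℂ) → E} {c : Fin (n+1) → ℂ} {R : Fin (n+1) → ℝ}
    (hf : TorusIntegrable f c R) (i : Fin (n + 1)) :
    (∯ x in T(c, R), f x) =
      ∯ y in T(c ∘ i.succAbove, R ∘ i.succAbove), ∮ x in C(c i, R i), f (i.insertNth x y) := by
  set e : ℝ × (Fin n → ℝ) ≃ᵐ (Fin (n+1) → ℝ) := (MeasurableEquiv.piFinSuccAbove (fun _ => ℝ) i).symm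
  have hem : MeasurePreserving e :=
    (volume_preserving_piFinSuccAbove (fun _ : Fin (n + 1) => ℝ) i).symm _
  have heπ : (e ⁻¹' Icc 0 fun _ => 2 * π) = Icc 0 (2 * π) ×ˢ Icc (0 : Fin n → ℝ) fun _ => 2 * π :=
    ((Fin.insertNthOrderIso (fun _ => ℝ) i).preimage_Icc _ _).trans (Icc_prod_eq _ _)
  have hint : Integrable (fun z : ℝ × (Fin n → ℝ) =>
      (∏ j, R j * exp (e z j * I) * I : ℂ) • f (torusMap c R (e z)))
      ((volume.restrict (Icc 0 (2 * π))).prod (volume.restrict (Icc 0 fun _ => 2 * π))) := by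
    have := hf.function_integrable
    rw [← hem.integrableOn_comp_preimage e.measurableEmbedding, heπ,
      IntegrableOn, Measure.volume_eq_prod, ← Measure.prod_restrict] at this
    exact this
  rw [torusIntegral, ← hem.map_eq, setIntegral_map_equiv, heπ, setIntegral_congr_set (by rfl),
    Measure.volume_eq_prod, ← Measure.prod_restrict, integral_prod_symm _ hint, torusIntegral]
  refine setIntegral_congr_fun measurableSet_Icc fun Θ _ => ?_
  rw [circleIntegral_def_Icc, ← integral_smul]
  refine setIntegral_congr_fun measurableSet_Icc fun θ _ => ?_
  simp (config := { unfoldPartialApp := true }) only [e, deriv_circleMap,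
    i.prod_univ_succAbove _, smul_smul, torusMap, circleMap_zero]
  simp only [MeasurableEquiv.piFinSuccAbove_symm_apply, i.insertNth_apply_same,
    i.insertNth_apply_succAbove, (· ∘ ·), Fin.insertNthEquiv, Equiv.coe_fn_mk]
  refine congr_arg₂ (· • ·) (by ring) (congr_arg f ?_)
  simp only [funext_iff, i.forall_iff_succAbove, circleMap, Fin.insertNth_apply_same,
    eq_self_iff_true, Fin.insertNth_apply_succAbove, imp_true_iff, and_self_iff]

theorem torusIntegral_congr_fun {f g : (Fin n → ℂ) → E} {c : Fin n → ℂ} {R : Fin n → ℝ}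
    (h : ∀ θ : Fin n → ℝ, f (torusMap c R θ) = g (torusMap c R θ)) :
    (∯ x in T(c, R), f x) = ∯ x in T(c, R), g x := by
  rw [torusIntegral, torusIntegral]
  exact setIntegral_congr_fun measurableSet_Icc fun θ _ => by rw [h]

theorem schur_det {n : ℕ} (A : Matrix (Fin (n+1)) (Fin (n+1)) ℂ) (h : A 0 0 ≠ 0) :
    A.det = A 0 0 * (Matrix.of fun r ℓ : Fin n =>
      A r.succ ℓ.succ - A r.succ 0 * A 0 ℓ.succ / A 0 0).det := by
  set B : Matrix (Fin (n+1)) (Fin (n+1)) ℂ :=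
    Matrix.of fun r ℓ => A r ℓ - (if r = 0 then 0 else A r 0 / A 0 0) * A 0 ℓ with hB
  have hdet : A.det = B.det := by
    refine Matrix.det_eq_of_forall_row_eq_smul_add_const (A := A) (B := B)
      (fun r => if r = 0 then 0 else A r 0 / A 0 0) 0 (by simp) fun i j => ?_
    by_cases hi : i = 0 <;> simp [hB, hi]
  rw [hdet, Matrix.det_succ_column_zero]
  rw [Finset.sum_eq_single 0]
  · have h00 : B 0 0 = A 0 0 := by simp [hB]
    have hsub : (B.submatrix (Fin.succAbove 0) Fin.succ) = Matrix.of fun r ℓ : Fin n =>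
        A r.succ ℓ.succ - A r.succ 0 * A 0 ℓ.succ / A 0 0 := by
      ext r ℓ
      simp [hB, Fin.succAbove, Matrix.submatrix, Fin.succ_ne_zero]
      ring
    rw [h00, hsub]
    simp
  · intro i _ hi
    have : B i 0 = 0 := by
      simp [hB, hi]
      rw [div_mul_cancel₀ _ h, sub_self]
    simp [this]
  · simp

/-- Nonvanishing of the linear forms. -/
theorem w_ne {n : ℕ} (A : Matrix (Fin n) (Fin n) ℂ) (b : Fin n → ℂ) (r : Fin n)
    (hr : ‖b r‖ + ∑ ℓ, ‖A r ℓ - (1 : Matrix (Fin n) (Fin n) ℂ) r ℓ‖ < 1)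
    (z : Fin n → ℂ) (hz : ∀ ℓ, ‖z ℓ‖ ≤ 1) (hzr : ‖z r‖ = 1) :
    b r + ∑ ℓ, A r ℓ * z ℓ ≠ 0 := by
  have key : ‖b r + ∑ ℓ, (A r ℓ - (1 : Matrix (Fin n) (Fin n) ℂ) r ℓ) * z ℓ‖ < 1 := by
    calc ‖b r + ∑ ℓ, (A r ℓ - (1 : Matrix (Fin n) (Fin n) ℂ) r ℓ) * z ℓ‖
        ≤ ‖b r‖ + ‖∑ ℓ, (A r ℓ - (1 : Matrix (Fin n) (Fin n) ℂ) r ℓ) * z ℓ‖ :=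
          norm_add_le _ _
      _ ≤ ‖b r‖ + ∑ ℓ, ‖(A r ℓ - (1 : Matrix (Fin n) (Fin n) ℂ) r ℓ) * z ℓ‖ := by
          gcongr
          exact norm_sum_le _ _
      _ ≤ ‖b r‖ + ∑ ℓ, ‖A r ℓ - (1 : Matrix (Fin n) (Fin n) ℂ) r ℓ‖ := by
          gcongr with ℓ
          rw [norm_mul]
          exact mul_le_of_le_one_right (by positivity) (hz ℓ)
      _ < 1 := hr
  have expand : b r + ∑ ℓ, A r ℓ * z ℓ
      = z r + (b r + ∑ ℓ, (A r ℓ - (1 : Matrix (Fin n) (Fin n) ℂ) r ℓ) * z ℓ) := by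
    have h1 : ∑ ℓ, (1 : Matrix (Fin n) (Fin n) ℂ) r ℓ * z ℓ = z r := by
      simp [Matrix.one_apply, Finset.sum_ite_eq]
    have h2 : ∑ ℓ, A r ℓ * z ℓ = ∑ ℓ, (A r ℓ - (1 : Matrix (Fin n) (Fin n) ℂ) r ℓ) * z ℓ
        + ∑ ℓ, (1 : Matrix (Fin n) (Fin n) ℂ) r ℓ * z ℓ := by
      rw [← Finset.sum_add_distrib]
      exact Finset.sum_congr rfl fun ℓ _ => by ring
    rw [h2, h1]; ring
  rw [expand]
  intro h0
  have : ‖z r‖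
      = ‖b r + ∑ ℓ, (A r ℓ - (1 : Matrix (Fin n) (Fin n) ℂ) r ℓ) * z ℓ‖ := by
    rw [show z r = -(b r + ∑ ℓ, (A r ℓ - (1 : Matrix (Fin n) (Fin n) ℂ) r ℓ) * z ℓ) by
      linear_combination h0]
    rw [norm_neg]
  rw [hzr] at this
  linarith [key, this.le]

theorem key : ∀ {n : ℕ} (A : Matrix (Fin n) (Fin n) ℂ) (b : Fin n → ℂ),
    (∀ r, ‖b r‖ +
      ∑ ℓ, ‖A r ℓ - (1 : Matrix (Fin n) (Fin n) ℂ) r ℓ‖ < 1) →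
    (∯ z in T((0 : Fin n → ℂ), fun _ => (1 : ℝ)), (∏ r, (b r + ∑ ℓ, A r ℓ * z ℓ))⁻¹)
      = (2 * π * Complex.I) ^ n / A.det := by
  intro n
  induction n with
  | zero =>
    intro A b H
    simp [Matrix.det_fin_zero]
  | succ n IH =>
    intro A b H
    -- notation
    set a : ℂ := A 0 0 with ha_def
    have hrow0 := H 0
    have hsplit0 : ∑ ℓ : Fin (n+1), ‖A 0 ℓ - (1 : Matrix (Fin (n+1)) (Fin (n+1)) ℂ) 0 ℓ‖
        = ‖a - 1‖ + ∑ ℓ : Fin n, ‖A 0 ℓ.succ‖ := by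
      rw [Fin.sum_univ_succ, Matrix.one_apply_eq, ← ha_def]
      congr 1
      refine Finset.sum_congr rfl fun ℓ _ => ?_
      rw [Matrix.one_apply_ne (Fin.succ_ne_zero ℓ).symm, sub_zero]
    rw [hsplit0] at hrow0
    have habs_nonneg : (0:ℝ) ≤ ‖b 0‖ := norm_nonneg _
    have hsum_nonneg : (0:ℝ) ≤ ∑ ℓ : Fin n, ‖A 0 ℓ.succ‖ :=
      Finset.sum_nonneg fun ℓ _ => norm_nonneg _
    have ha1 : ‖a - 1‖ < 1 := by linarith
    have htri : (1:ℝ) ≤ ‖a‖ + ‖a - 1‖ := by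
      have h := norm_add_le a (1 - a)
      simp only [add_sub_cancel, norm_one] at h
      have : ‖1 - a‖ = ‖a - 1‖ := by
        rw [← norm_neg]; ring_nf
      linarith
    have hapos : 0 < ‖a‖ := by linarith
    have ha : a ≠ 0 := norm_pos_iff.mp hapos
    have hq2 : ‖b 0‖ + ∑ ℓ : Fin n, ‖A 0 ℓ.succ‖ < ‖a‖ := by
      linarith
    -- Schur data
    set A' : Matrix (Fin n) (Fin n) ℂ :=
      Matrix.of (fun r ℓ : Fin n => A r.succ ℓ.succ - A r.succ 0 * A 0 ℓ.succ / a) with hA'def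
    set b' : Fin n → ℂ := fun r => b r.succ - A r.succ 0 * b 0 / a with hb'def
    have hrw : ∀ (r : Fin n) (x : ℂ) (y : Fin n → ℂ),
        b r.succ + ∑ ℓ : Fin (n+1), A r.succ ℓ * (Fin.cons x y : Fin (n+1) → ℂ) ℓ
          = (b r.succ + ∑ ℓ : Fin n, A r.succ ℓ.succ * y ℓ) + A r.succ 0 * x := by
      intro r x y
      rw [Fin.sum_univ_succ]
      simp only [Fin.cons_zero, Fin.cons_succ]
      ring
    -- hypothesis for the Schur complement
    have H' : ∀ r, ‖b' r‖ +
        ∑ ℓ, ‖A' r ℓ - (1 : Matrix (Fin n) (Fin n) ℂ) r ℓ‖ < 1 := by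
      intro r
      have hd := H r.succ
      have hsplit : ∑ ℓ : Fin (n+1),
            ‖A r.succ ℓ - (1 : Matrix (Fin (n+1)) (Fin (n+1)) ℂ) r.succ ℓ‖
          = ‖A r.succ 0‖
            + ∑ ℓ : Fin n, ‖A r.succ ℓ.succ - (1 : Matrix (Fin n) (Fin n) ℂ) r ℓ‖ := by
        rw [Fin.sum_univ_succ]
        congr 1
        · congr 1
          simp [Matrix.one_apply, Fin.succ_ne_zero]
        · refine Finset.sum_congr rfl fun ℓ _ => ?_
          congr 2
          simp [Matrix.one_apply, Fin.succ_inj]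
      rw [hsplit] at hd
      set u := ‖A r.succ 0‖ with hu
      have hu0 : 0 ≤ u := norm_nonneg _
      have hb'bd : ‖b' r‖
          ≤ ‖b r.succ‖ + u * ‖b 0‖ / ‖a‖ := by
        simp only [hb'def]
        rw [sub_eq_add_neg]
        refine (norm_add_le _ _).trans ?_
        rw [norm_neg, norm_div, norm_mul]
      have hA'bd : ∀ ℓ : Fin n, ‖A' r ℓ - (1 : Matrix (Fin n) (Fin n) ℂ) r ℓ‖
          ≤ ‖A r.succ ℓ.succ - (1 : Matrix (Fin n) (Fin n) ℂ) r ℓ‖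
            + u * ‖A 0 ℓ.succ‖ / ‖a‖ := by
        intro ℓ
        have h1 : A' r ℓ - (1 : Matrix (Fin n) (Fin n) ℂ) r ℓ
            = (A r.succ ℓ.succ - (1 : Matrix (Fin n) (Fin n) ℂ) r ℓ)
              + -(A r.succ 0 * A 0 ℓ.succ / a) := by
          simp only [hA'def, Matrix.of_apply]
          ring
        rw [h1]
        refine (norm_add_le _ _).trans ?_
        rw [norm_neg, norm_div, norm_mul]
      have hsum2 : ∑ ℓ : Fin n, (‖A r.succ ℓ.succ - (1 : Matrix (Fin n) (Fin n) ℂ) r ℓ‖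
            + u * ‖A 0 ℓ.succ‖ / ‖a‖)
          = (∑ ℓ : Fin n, ‖A r.succ ℓ.succ - (1 : Matrix (Fin n) (Fin n) ℂ) r ℓ‖)
            + (u / ‖a‖) * ∑ ℓ : Fin n, ‖A 0 ℓ.succ‖ := by
        rw [Finset.sum_add_distrib, Finset.mul_sum]
        congr 1
        exact Finset.sum_congr rfl fun ℓ _ => by ring
      have hfinal : (u / ‖a‖) * (‖b 0‖ + ∑ ℓ : Fin n, ‖A 0 ℓ.succ‖)
          ≤ u := by
        have h1 : (u / ‖a‖) * (‖b 0‖ + ∑ ℓ : Fin n, ‖A 0 ℓ.succ‖)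
            ≤ (u / ‖a‖) * ‖a‖ :=
          mul_le_mul_of_nonneg_left hq2.le (by positivity)
        rwa [div_mul_cancel₀ _ hapos.ne'] at h1
      calc ‖b' r‖ + ∑ ℓ, ‖A' r ℓ - (1 : Matrix (Fin n) (Fin n) ℂ) r ℓ‖
          ≤ (‖b r.succ‖ + u * ‖b 0‖ / ‖a‖)
            + ∑ ℓ : Fin n, (‖A r.succ ℓ.succ - (1 : Matrix (Fin n) (Fin n) ℂ) r ℓ‖
              + u * ‖A 0 ℓ.succ‖ / ‖a‖) :=
            add_le_add hb'bd (Finset.sum_le_sum fun ℓ _ => hA'bd ℓ)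
        _ = ‖b r.succ‖
            + (∑ ℓ : Fin n, ‖A r.succ ℓ.succ - (1 : Matrix (Fin n) (Fin n) ℂ) r ℓ‖)
            + (u / ‖a‖) * (‖b 0‖ + ∑ ℓ : Fin n, ‖A 0 ℓ.succ‖) := by
            rw [hsum2]; ring
        _ ≤ ‖b r.succ‖
            + (∑ ℓ : Fin n, ‖A r.succ ℓ.succ - (1 : Matrix (Fin n) (Fin n) ℂ) r ℓ‖)
            + u := by linarith
        _ < 1 := by linarith
    -- torus point absolings
    have habs_torus : ∀ {m : ℕ} (θ : Fin m → ℝ) (ℓ : Fin m),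
        ‖torusMap (0 : Fin m → ℂ) (fun _ => (1:ℝ)) θ ℓ‖ = 1 := by
      intro m θ ℓ; simp [torusMap]
    -- torus integrability of the integrand
    have hti : TorusIntegrable (fun z : Fin (n+1) → ℂ =>
        (∏ r, (b r + ∑ ℓ, A r ℓ * z ℓ))⁻¹) (0 : Fin (n+1) → ℂ) (fun _ => (1:ℝ)) := by
      refine ContinuousOn.integrableOn_compact isCompact_Icc ?_
      refine Continuous.continuousOn ?_
      refine Continuous.inv₀ ?_ ?_
      · refine continuous_finset_prod _ fun r _ => ?_
        refine continuous_const.add (continuous_finset_sum _ fun ℓ _ => continuous_const.mul ?_)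
        unfold torusMap
        fun_prop
      · intro θ
        refine Finset.prod_ne_zero_iff.mpr fun r _ => ?_
        exact w_ne A b r (H r) _ (fun ℓ => (habs_torus θ ℓ).le) (habs_torus θ r)
    -- peel off the first variable, circle integral innermost
    rw [torusIntegral_comm hti 0]
    have e1 : ((0 : Fin (n+1) → ℂ) ∘ Fin.succAbove 0) = (0 : Fin n → ℂ) := rfl
    have e2 : ((fun _ : Fin (n+1) => (1:ℝ)) ∘ Fin.succAbove 0) = fun _ : Fin n => (1:ℝ) := rfl
    have e3 : (0 : Fin (n+1) → ℂ) 0 = (0 : ℂ) := rfl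
    rw [e1, e2]
    simp only [Pi.zero_apply]
    -- the Cauchy integral step
    have hstep : ∀ Θ : Fin n → ℝ,
        (∮ x in C((0:ℂ), (1:ℝ)),
          (∏ r, (b r + ∑ ℓ, A r ℓ * (((0 : Fin (n+1)).insertNth x
            (torusMap (0 : Fin n → ℂ) (fun _ => (1:ℝ)) Θ) : Fin (n+1) → ℂ)) ℓ))⁻¹)
          = (2 * π * Complex.I * a⁻¹) *
            (∏ r, (b' r + ∑ ℓ, A' r ℓ * torusMap (0 : Fin n → ℂ) (fun _ => (1:ℝ)) Θ ℓ))⁻¹ := by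
      intro Θ
      set y : Fin n → ℂ := torusMap (0 : Fin n → ℂ) (fun _ => (1:ℝ)) Θ with hy_def
      have hy : ∀ ℓ, ‖y ℓ‖ = 1 := fun ℓ => habs_torus Θ ℓ
      set c₀ : ℂ := b 0 + ∑ ℓ : Fin n, A 0 ℓ.succ * y ℓ with hc0
      have hc0abs : ‖c₀‖ < ‖a‖ := by
        refine lt_of_le_of_lt ?_ hq2
        refine (norm_add_le _ _).trans ?_
        gcongr
        refine (norm_sum_le _ _).trans ?_
        refine Finset.sum_le_sum fun ℓ _ => ?_
        rw [norm_mul, hy ℓ, mul_one]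
      set ζ : ℂ := -c₀ / a with hζdef
      have hζ : ζ ∈ Metric.ball (0:ℂ) 1 := by
        rw [Metric.mem_ball, dist_zero_right, hζdef, norm_div,
          norm_neg]
        exact (div_lt_one hapos).mpr hc0abs
      set g : ℂ → ℂ := fun x => a⁻¹ *
        (∏ r : Fin n, (b r.succ + ∑ ℓ : Fin (n+1),
          A r.succ ℓ * (Fin.cons x y : Fin (n+1) → ℂ) ℓ))⁻¹ with hg_def
      have hcons : ∀ x : ℂ, ((0 : Fin (n+1)).insertNth x y : Fin (n+1) → ℂ) = Fin.cons x y :=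
        fun x => Fin.insertNth_zero' x y
      have hfactor : ∀ x : ℂ,
          (∏ r, (b r + ∑ ℓ, A r ℓ * (((0 : Fin (n+1)).insertNth x y : Fin (n+1) → ℂ)) ℓ))⁻¹
            = (x - ζ)⁻¹ • g x := by
        intro x
        rw [hcons x, Fin.prod_univ_succ, mul_inv]
        have h0 : b 0 + ∑ ℓ : Fin (n+1), A 0 ℓ * (Fin.cons x y : Fin (n+1) → ℂ) ℓ
            = a * (x - ζ) := by
          rw [Fin.sum_univ_succ]
          simp only [Fin.cons_zero, Fin.cons_succ]
          rw [hζdef, hc0]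
          field_simp
          ring
        rw [h0, mul_inv, smul_eq_mul, hg_def]
        ring
      have hg_diff : DifferentiableOn ℂ g (Metric.closedBall 0 1) := by
        refine DifferentiableOn.const_mul ?_ _
        refine DifferentiableOn.inv ?_ ?_
        · refine DifferentiableOn.fun_finset_prod fun r _ => ?_
          refine DifferentiableOn.const_add _ ?_
          refine DifferentiableOn.fun_sum fun ℓ _ => ?_
          refine DifferentiableOn.const_mul ?_ _
          refine Differentiable.differentiableOn ?_
          refine Fin.cases ?_ ?_ ℓ
          · simpa using differentiable_id
          · intro i
            simpa using differentiable_const (y i)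
        · intro x hx
          rw [Metric.mem_closedBall, dist_zero_right] at hx
          refine Finset.prod_ne_zero_iff.mpr fun r _ => ?_
          refine w_ne A b r.succ (H r.succ) _ ?_ ?_
          · intro ℓ
            refine Fin.cases ?_ ?_ ℓ
            · simpa using hx
            · intro i; simp [hy i]
          · simp [hy r]
      have hCauchy := hg_diff.circleIntegral_sub_inv_smul hζ
      have hgζ : g ζ = a⁻¹ * (∏ r : Fin n, (b' r + ∑ ℓ : Fin n, A' r ℓ * y ℓ))⁻¹ := by
        simp only [hg_def]
        congr 2
        refine Finset.prod_congr rfl fun r _ => ?_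
        rw [hrw r ζ y]
        have hsum : ∑ ℓ : Fin n, A' r ℓ * y ℓ
            = ∑ ℓ : Fin n, A r.succ ℓ.succ * y ℓ
              - (A r.succ 0 / a) * ∑ ℓ : Fin n, A 0 ℓ.succ * y ℓ := by
          rw [Finset.mul_sum, ← Finset.sum_sub_distrib]
          refine Finset.sum_congr rfl fun ℓ _ => ?_
          simp only [hA'def, Matrix.of_apply]
          ring
        simp only [hb'def]
        rw [hsum, hζdef, hc0]
        field_simp
        ring
      simp only [hfactor]
      rw [hCauchy, hgζ, smul_eq_mul]
      ring
    rw [torusIntegral_congr_fun (g := fun y => (2 * π * Complex.I * a⁻¹) *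
        (∏ r, (b' r + ∑ ℓ, A' r ℓ * y ℓ))⁻¹) hstep,
      torusIntegral_const_mul, IH A' b' H',
      schur_det A (by rwa [← ha_def]), pow_succ]
    rw [← ha_def, ← hA'def, div_eq_mul_inv, div_eq_mul_inv, mul_inv]
    ring


end StmtAux

theorem stmt1' {k : ℕ} (hk : 0 < k) (A : Matrix (Fin k) (Fin k) ℂ)
    (hA : Real.sqrt (∑ r, ∑ l, ‖(A - 1) r l‖ ^ 2) < 1 / k) :
    1 / A.det =
      (1 / (2 * Real.pi * Complex.I)) ^ k *
        ∯ z in T((0 : Fin k → ℂ), fun _ => (1 : ℝ)),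
          1 / ∏ r, ∑ l, A r l * z l := by
  have hk1 : (1:ℝ) ≤ (k:ℝ) := by exact_mod_cast hk
  have hkpos : (0:ℝ) < (k:ℝ) := by positivity
  have hS : ∀ r, ∑ ℓ, ‖A r ℓ - (1 : Matrix (Fin k) (Fin k) ℂ) r ℓ‖ < 1 := by
    intro r
    have h0 : (0:ℝ) ≤ ∑ ℓ, ‖A r ℓ - (1 : Matrix (Fin k) (Fin k) ℂ) r ℓ‖ :=
      Finset.sum_nonneg fun ℓ _ => norm_nonneg _
    have h1 : (∑ ℓ, ‖A r ℓ - (1 : Matrix (Fin k) (Fin k) ℂ) r ℓ‖)^2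
        ≤ (k:ℝ) * ∑ ℓ, ‖A r ℓ - (1 : Matrix (Fin k) (Fin k) ℂ) r ℓ‖^2 := by
      have := sq_sum_le_card_mul_sum_sq (s := (Finset.univ : Finset (Fin k)))
        (f := fun ℓ => ‖A r ℓ - (1 : Matrix (Fin k) (Fin k) ℂ) r ℓ‖)
      simpa using this
    have h2 : ∑ ℓ, ‖A r ℓ - (1 : Matrix (Fin k) (Fin k) ℂ) r ℓ‖^2
        ≤ ∑ r', ∑ ℓ, ‖(A - 1) r' ℓ‖^2 := by
      have : ∀ r', (0:ℝ) ≤ ∑ ℓ, ‖(A - 1) r' ℓ‖^2 :=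
        fun r' => Finset.sum_nonneg fun ℓ _ => sq_nonneg _
      have hle := Finset.single_le_sum (f := fun r' => ∑ ℓ, ‖(A - 1) r' ℓ‖^2)
        (fun r' _ => this r') (Finset.mem_univ r)
      simpa [Matrix.sub_apply] using hle
    have hnn : (0:ℝ) ≤ ∑ r', ∑ ℓ, ‖(A - 1) r' ℓ‖^2 :=
      Finset.sum_nonneg fun r' _ => Finset.sum_nonneg fun ℓ _ => sq_nonneg _
    have h3 : ∑ r', ∑ ℓ, ‖(A - 1) r' ℓ‖^2 < (1/(k:ℝ))^2 := by
      have hsq := Real.sq_sqrt hnn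
      have hpow : Real.sqrt (∑ r', ∑ ℓ, ‖(A - 1) r' ℓ‖^2) ^ 2 < (1/(k:ℝ))^2 := by
        have := Real.sqrt_nonneg (∑ r', ∑ ℓ, ‖(A - 1) r' ℓ‖^2)
        nlinarith [hA]
      rwa [hsq] at hpow
    have h4 : (k:ℝ) * (1/(k:ℝ))^2 ≤ 1 := by
      rw [div_pow, one_pow, mul_one_div, div_le_one (by positivity)]
      nlinarith
    nlinarith
  have H : ∀ r, ‖(0 : Fin k → ℂ) r‖ +
      ∑ ℓ, ‖A r ℓ - (1 : Matrix (Fin k) (Fin k) ℂ) r ℓ‖ < 1 := by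
    intro r; simpa using hS r
  have hkey := StmtAux.key A 0 H
  simp only [Pi.zero_apply, zero_add] at hkey
  have hx : ((2:ℂ) * π * Complex.I) ^ k ≠ 0 :=
    pow_ne_zero _ (mul_ne_zero (mul_ne_zero two_ne_zero
      (Complex.ofReal_ne_zero.mpr Real.pi_ne_zero)) Complex.I_ne_zero)
  simp only [← one_div] at hkey
  rw [hkey, one_div (2 * (π:ℂ) * Complex.I), inv_pow, one_div,
    div_eq_mul_inv, ← mul_assoc, inv_mul_cancel₀ hx, one_mul]

end

end Aux

theorem stmt1 {k : ℕ} (hk : 0 < k) (A : Matrix (Fin k) (Fin k) ℂ)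
    (hA : frobNorm (A - 1) < 1 / k) :
    1 / A.det =
      (1 / (2 * Real.pi * Complex.I)) ^ k *
        ∯ z in T((0 : Fin k → ℂ), fun _ => (1 : ℝ)),
          1 / ∏ r, ∑ l, A r l * z l := by
  unfold frobNorm at hA
  exact stmt1' hk A hA
end

section
/- Let A ∈ ℂ^(k×k) with ‖A − 1_k‖ < 1/k, let w_r(z) = ∑_ℓ a_{r,ℓ} z_ℓ, and fix z₂,…,z_k on the unit circle. Then (1/(2πi)) ∮_{|z₁|=1} dz₁ / w_r(z) equals 1/a_{1,1} if r = 1, and equals 0 if 2 ≤ r ≤ k. -/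
open Finset Real Complex

lemma entry_le_frobNorm {k : ℕ} (M : Matrix (Fin k) (Fin k) ℂ) (i j : Fin k) :
    ‖M i j‖ ≤ frobNorm M := by
  rw [frobNorm, show ‖M i j‖ = Real.sqrt (‖M i j‖ ^ 2) by
    rw [Real.sqrt_sq (norm_nonneg _)]]
  apply Real.sqrt_le_sqrt
  calc ‖M i j‖ ^ 2 ≤ ∑ l, ‖M i l‖ ^ 2 :=
        Finset.single_le_sum (f := fun l => ‖M i l‖ ^ 2)
          (fun l _ => by positivity) (mem_univ j)
    _ ≤ ∑ r, ∑ l, ‖M r l‖ ^ 2 :=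
        Finset.single_le_sum (f := fun r => ∑ l, ‖M r l‖ ^ 2)
          (fun r _ => Finset.sum_nonneg fun l _ => by positivity) (mem_univ i)

theorem stmt2 {k : ℕ} [NeZero k] (A : Matrix (Fin k) (Fin k) ℂ)
    (hA : frobNorm (A - 1) < 1 / k) (z : Fin k → ℂ)
    (hz : ∀ l : Fin k, l ≠ 0 → ‖z l‖ = 1) (r : Fin k) :
    (1 / (2 * Real.pi * Complex.I)) *
        (∮ z₁ in C(0, 1), 1 / ∑ l, A r l * Function.update z 0 z₁ l) =
      if r = 0 then 1 / A 0 0 else 0 := by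
  have hk1 : (1 : ℝ) ≤ (k : ℝ) := by
    exact_mod_cast Nat.one_le_iff_ne_zero.2 (NeZero.ne k)
  have hkpos : (0 : ℝ) < (k : ℝ) := by linarith
  have hentry : ∀ i j, ‖(A - 1) i j‖ < 1 / k := fun i j =>
    lt_of_le_of_lt (entry_le_frobNorm _ i j) hA
  set a : ℂ := A r 0 with ha_def
  set c : ℂ := ∑ l ∈ univ.erase (0 : Fin k), A r l * z l with hc_def
  have hcard : (univ.erase (0 : Fin k)).card = k - 1 := by
    rw [Finset.card_erase_of_mem (mem_univ _), Finset.card_univ, Fintype.card_fin]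
  have hsum : ∀ z₁ : ℂ, (∑ l, A r l * Function.update z 0 z₁ l) = a * z₁ + c := by
    intro z₁
    rw [← Finset.add_sum_erase _ _ (mem_univ (0 : Fin k))]
    simp only [Function.update_self, ha_def]
    congr 1
    refine Finset.sum_congr rfl fun l hl => ?_
    rw [Function.update_of_ne (Finset.ne_of_mem_erase hl)]
  -- bound on sum over erase of entry bounds
  have herase : ∀ (f : Fin k → ℂ), (∀ l ∈ univ.erase (0 : Fin k), ‖f l‖ ≤ 1 / k) →
      ‖∑ l ∈ univ.erase (0 : Fin k), f l‖ ≤ ((k : ℝ) - 1) / k := by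
    intro f hf
    calc ‖∑ l ∈ univ.erase (0 : Fin k), f l‖
        ≤ ∑ l ∈ univ.erase (0 : Fin k), ‖f l‖ := norm_sum_le _ _
      _ ≤ ∑ _l ∈ univ.erase (0 : Fin k), (1 / k : ℝ) := Finset.sum_le_sum hf
      _ = ((k - 1 : ℕ) : ℝ) * (1 / k) := by rw [Finset.sum_const, hcard, nsmul_eq_mul]
      _ = ((k : ℝ) - 1) / k := by
          rw [Nat.cast_sub (Nat.one_le_iff_ne_zero.2 (NeZero.ne k))]
          push_cast; ring
  by_cases hr : r = 0
  · -- pole inside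
    subst hr
    have ha1 : ‖a - 1‖ < 1 / k := by
      have := hentry 0 0; simpa [Matrix.sub_apply, Matrix.one_apply, ha_def] using this
    have halb : 1 - 1 / (k : ℝ) < ‖a‖ := by
      have h1 : (1 : ℝ) ≤ ‖a - 1‖ + ‖a‖ := by
        calc (1 : ℝ) = ‖(a - 1) * (-1) + a‖ := by norm_num
          _ ≤ ‖(a - 1) * (-1)‖ + ‖a‖ := norm_add_le _ _
          _ = ‖a - 1‖ + ‖a‖ := by rw [norm_mul]; simp
      linarith
    have hapos : a ≠ 0 := by
      intro h
      rw [h, norm_zero] at halb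
      have : (1 : ℝ) / k ≤ 1 := by
        rw [div_le_one hkpos]; linarith
      linarith
    have hcb : ‖c‖ ≤ ((k : ℝ) - 1) / k := by
      apply herase
      intro l hl
      have hl0 : l ≠ 0 := Finset.ne_of_mem_erase hl
      have := hentry 0 l
      rw [Matrix.sub_apply, Matrix.one_apply_ne (Ne.symm hl0), sub_zero] at this
      calc ‖A 0 l * z l‖ = ‖A 0 l‖ * 1 := by
            rw [norm_mul, hz l hl0]
        _ ≤ 1 / k := by simpa using this.le
    have hca : ‖c‖ < ‖a‖ := by
      have : ((k : ℝ) - 1) / k = 1 - 1 / k := by field_simp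
      linarith [hcb, halb, this ▸ hcb]
    have hw : -(c / a) ∈ Metric.ball (0 : ℂ) 1 := by
      rw [Metric.mem_ball, dist_zero_right]
      rw [norm_neg, norm_div]
      rw [div_lt_one (norm_pos_iff.2 hapos)]
      exact hca
    have hfun : ∀ z₁ : ℂ, (1 : ℂ) / (a * z₁ + c) = a⁻¹ * (z₁ - -(c / a))⁻¹ := by
      intro z₁
      rw [sub_neg_eq_add, one_div, ← mul_inv]
      congr 1
      field_simp
    simp only [hsum, hfun]
    rw [circleIntegral.integral_const_mul, circleIntegral.integral_sub_inv_of_mem_ball hw]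
    have h2pi : (2 * (Real.pi : ℂ) * Complex.I) ≠ 0 := by
      simp [Real.pi_ne_zero, Complex.I_ne_zero]
    field_simp
    rw [if_pos trivial, ← ha_def, mul_one_div_cancel hapos]
  · -- pole outside: integrand holomorphic on the closed disc
    have hab : ‖a‖ < 1 / k := by
      have := hentry r 0
      rw [Matrix.sub_apply, Matrix.one_apply_ne hr, sub_zero] at this
      exact this
    have hcb : 1 / (k : ℝ) ≤ ‖c‖ := by
      have he : ∀ l ∈ univ.erase (0 : Fin k), A r l * z l
          = ((A - 1) r l) * z l + (if l = r then z r else 0) := by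
        intro l _
        rw [Matrix.sub_apply, sub_mul]
        by_cases h : l = r
        · subst h; simp [Matrix.one_apply]
        · simp [Matrix.one_apply, Ne.symm h, h]
      have hsplit : c = (∑ l ∈ univ.erase (0 : Fin k), ((A - 1) r l) * z l) + z r := by
        rw [hc_def, Finset.sum_congr rfl he, Finset.sum_add_distrib]
        congr 1
        rw [Finset.sum_ite_eq' (univ.erase 0) r (fun _ => z r)]
        simp [Finset.mem_erase, hr]
      have hb : ‖∑ l ∈ univ.erase (0 : Fin k), ((A - 1) r l) * z l‖
          ≤ ((k : ℝ) - 1) / k := by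
        apply herase
        intro l hl
        have hl0 : l ≠ 0 := Finset.ne_of_mem_erase hl
        calc ‖(A - 1) r l * z l‖ = ‖(A - 1) r l‖ * 1 := by
              rw [norm_mul, hz l hl0]
          _ ≤ 1 / k := by simpa using (hentry r l).le
      have hzr : ‖z r‖ = 1 := hz r hr
      set S := ∑ l ∈ univ.erase (0 : Fin k), ((A - 1) r l) * z l with hS
      have h4 : c - S = z r := by rw [hsplit]; ring
      have h3 : ‖c - S‖ ≤ ‖c‖ + ‖S‖ := by
        calc ‖c - S‖ ≤ ‖c‖ + ‖-S‖ := by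
              rw [sub_eq_add_neg]; exact norm_add_le _ _
          _ = _ := by rw [norm_neg]
      rw [h4, hzr] at h3
      have hkk : ((k : ℝ) - 1) / k = 1 - 1 / k := by field_simp
      rw [hkk] at hb
      linarith
    have hne : ∀ z₁ ∈ Metric.closedBall (0 : ℂ) 1, a * z₁ + c ≠ 0 := by
      intro z₁ hz₁
      rw [Metric.mem_closedBall, dist_zero_right] at hz₁
      intro h
      have h1 : ‖c‖ = ‖a * z₁‖ := by
        have : c = -(a * z₁) := by linear_combination h
        rw [this, norm_neg]
      have h2 : ‖a * z₁‖ ≤ ‖a‖ * 1 := by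
        rw [norm_mul]
        exact mul_le_mul_of_nonneg_left hz₁ (norm_nonneg _)
      rw [mul_one] at h2
      linarith [h1 ▸ h2, hab, hcb, h1]
    simp only [hsum, hr, if_false]
    rw [circleIntegral_eq_zero_of_differentiable_on_off_countable (zero_le_one)
      (Set.countable_empty) ?_ ?_, mul_zero]
    · exact ContinuousOn.div continuousOn_const
        (((continuous_const.mul continuous_id).add continuous_const).continuousOn) hne
    · intro z₁ hz₁
      exact (differentiableAt_const 1).div
        ((differentiableAt_id.const_mul a).add_const c)
        (hne z₁ (Metric.ball_subset_closedBall hz₁.1))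
end

section
/- Let A ∈ ℂ^(k×k) with k ≥ 2 and ‖A − 1_k‖ < 1/k in the Frobenius norm. Define b_{r,ℓ} = a_{r,ℓ} − (a_{r,1}/a_{1,1}) a_{1,ℓ} for r,ℓ = 2,…,k (Schur complement with respect to the (1,1) entry). Then the (k−1)×(k−1) matrix B = {b_{r,ℓ}} satisfies ‖B − 1_{k−1}‖ ≤ 1/(k−1). -/
open Finset

/-- Embed a matrix into Euclidean space. -/
noncomputable def embMat {k : ℕ} (M : Matrix (Fin k) (Fin k) ℂ) :
    EuclideanSpace ℂ (Fin k × Fin k) := WithLp.toLp 2 (fun p : Fin k × Fin k => M p.1 p.2)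

lemma frob_eq_norm {k : ℕ} (M : Matrix (Fin k) (Fin k) ℂ) :
    frobNorm M = ‖embMat M‖ := by
  rw [EuclideanSpace.norm_eq, frobNorm]
  congr 1
  rw [Fintype.sum_prod_type]
  rfl

lemma frob_sub_le {k : ℕ} (M N : Matrix (Fin k) (Fin k) ℂ) :
    frobNorm (M - N) ≤ frobNorm M + frobNorm N := by
  rw [frob_eq_norm, frob_eq_norm, frob_eq_norm]
  have h : embMat (M - N) = embMat M - embMat N := by ext p; simp [embMat]
  rw [h]
  exact norm_sub_le _ _

set_option maxHeartbeats 1000000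

/-- Statement 5, with the size `k` of the paper written as `k + 1` (so `k + 1 ≥ 2`
corresponds to `1 ≤ k`).  `B` is the Schur complement of the `(1,1)` entry. -/
theorem stmt5 {k : ℕ} (hk : 1 ≤ k) (A : Matrix (Fin (k + 1)) (Fin (k + 1)) ℂ)
    (hA : frobNorm (A - 1) < 1 / (k + 1)) :
    frobNorm
        ((Matrix.of fun r l : Fin k =>
            A r.succ l.succ - A r.succ 0 / A 0 0 * A 0 l.succ) - 1) ≤ 1 / k := by
  have hk1 : (1:ℝ) ≤ (k:ℝ) := by exact_mod_cast hk
  set ε : ℝ := frobNorm (A - 1) with hεdef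
  have hε0 : 0 ≤ ε := Real.sqrt_nonneg _
  have hεhalf : ε < 1/2 := by
    have : (1:ℝ) / (k+1) ≤ 1/2 := by
      apply one_div_le_one_div_of_le <;> linarith
    linarith
  -- abbreviations
  set X : ℝ := ∑ r : Fin k, ‖A r.succ 0‖ ^ 2 with hXdef
  set Y : ℝ := ∑ l : Fin k, ‖A 0 l.succ‖ ^ 2 with hYdef
  set M1 : Matrix (Fin k) (Fin k) ℂ :=
    Matrix.of (fun r l : Fin k => A r.succ l.succ) - 1 with hM1def
  set M2 : Matrix (Fin k) (Fin k) ℂ :=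
    Matrix.of (fun r l : Fin k => A r.succ 0 / A 0 0 * A 0 l.succ) with hM2def
  set T : ℝ := ∑ r, ∑ l, ‖M1 r l‖ ^ 2 with hTdef
  have hX0 : 0 ≤ X := Finset.sum_nonneg fun _ _ => sq_nonneg _
  have hY0 : 0 ≤ Y := Finset.sum_nonneg fun _ _ => sq_nonneg _
  have hT0 : 0 ≤ T := Finset.sum_nonneg fun _ _ =>
    Finset.sum_nonneg fun _ _ => sq_nonneg _
  -- decomposition of ε²
  have hεsq : ε ^ 2 = ∑ r, ∑ l, ‖(A - 1) r l‖ ^ 2 := by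
    rw [hεdef, frobNorm, Real.sq_sqrt]
    exact Finset.sum_nonneg fun _ _ => Finset.sum_nonneg fun _ _ => sq_nonneg _
  have hdec : ‖A 0 0 - 1‖ ^ 2 + Y + (X + T) = ε ^ 2 := by
    rw [hεsq]
    simp only [Fin.sum_univ_succ, Matrix.sub_apply, Matrix.one_apply,
      Fin.succ_ne_zero, (Fin.succ_ne_zero _).symm, Ne, not_false_iff, if_true,
      if_false, if_neg, sub_zero, Fin.succ_inj, hTdef, hM1def, hXdef, hYdef,
      Matrix.of_apply]
    rw [Finset.sum_add_distrib]
  -- bound on |A 0 0|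
  have ha1 : ‖A 0 0 - 1‖ ≤ ε := by
    have h1 : ‖A 0 0 - 1‖ ^ 2 ≤ ε ^ 2 := by nlinarith
    nlinarith [norm_nonneg (A 0 0 - 1)]
  have ha : 1 - ε ≤ ‖A 0 0‖ := by
    have := norm_sub_le (A 0 0) 1
    have h1 : ‖(A 0 0) - (A 0 0 - 1)‖ ≤
        ‖A 0 0‖ + ‖A 0 0 - 1‖ := norm_sub_le _ _
    simp at h1
    linarith
  have ha0 : 0 < ‖A 0 0‖ := by linarith
  -- the matrix in question is M1 - M2
  have hsplit : (Matrix.of fun r l : Fin k =>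
      A r.succ l.succ - A r.succ 0 / A 0 0 * A 0 l.succ) - 1 = M1 - M2 := by
    ext r l
    simp [hM1def, hM2def, Matrix.sub_apply]
    ring
  rw [hsplit]
  -- triangle inequality
  have htri := frob_sub_le M1 M2
  -- frobNorm M1 = sqrt T
  have hfM1 : frobNorm M1 = Real.sqrt T := rfl
  -- frobNorm M2
  have hfM2 : frobNorm M2 = Real.sqrt X * Real.sqrt Y / ‖A 0 0‖ := by
    rw [frobNorm]
    have hsum : ∑ r, ∑ l, ‖M2 r l‖ ^ 2
        = X * Y / ‖A 0 0‖ ^ 2 := by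
      simp only [hM2def, Matrix.of_apply, norm_mul, norm_div, mul_pow, div_pow]
      rw [Finset.sum_comm]
      simp only [div_mul_eq_mul_div, ← Finset.sum_div, ← Finset.sum_mul,
        ← Finset.mul_sum]
      rfl
    rw [hsum, Real.sqrt_div (mul_nonneg hX0 hY0), Real.sqrt_mul hX0,
      Real.sqrt_sq ha0.le]
  -- final arithmetic
  set t : ℝ := Real.sqrt T with htdef
  set p : ℝ := Real.sqrt X with hpdef
  set q : ℝ := Real.sqrt Y with hqdef
  have ht2 : t ^ 2 = T := Real.sq_sqrt hT0
  have hp2 : p ^ 2 = X := Real.sq_sqrt hX0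
  have hq2 : q ^ 2 = Y := Real.sq_sqrt hY0
  have ht0 : 0 ≤ t := Real.sqrt_nonneg _
  have hp0 : 0 ≤ p := Real.sqrt_nonneg _
  have hq0 : 0 ≤ q := Real.sqrt_nonneg _
  clear_value t p q
  clear_value T X Y ε
  have hsum2 : t ^ 2 + p ^ 2 + q ^ 2 ≤ ε ^ 2 := by
    nlinarith [sq_nonneg (‖A 0 0 - 1‖)]
  have htε : t ≤ ε := by nlinarith
  have het : 0 ≤ ε - t := by linarith
  have h1ε : 0 < 1 - ε := by linarith
  have hpq : p * q ≤ (ε ^ 2 - t ^ 2) / 2 := by nlinarith [sq_nonneg (p - q)]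
  have hd0 : 0 ≤ (ε ^ 2 - t ^ 2) / 2 := by nlinarith
  have h1 : p * q / ‖A 0 0‖ ≤ (ε ^ 2 - t ^ 2) / 2 / (1 - ε) :=
    div_le_div₀ hd0 hpq h1ε ha
  have h2 : (ε ^ 2 - t ^ 2) / 2 / (1 - ε) ≤ ε - t := by
    rw [div_le_iff₀ h1ε]
    nlinarith [mul_nonneg het (by linarith : (0:ℝ) ≤ 2 - 3 * ε - t)]
  have hεk : ε ≤ 1 / (k : ℝ) := by
    have h3 : (1:ℝ) / (k + 1) ≤ 1 / k := by
      apply one_div_le_one_div_of_le <;> linarith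
    linarith
  calc frobNorm (M1 - M2) ≤ frobNorm M1 + frobNorm M2 := htri
    _ = t + p * q / ‖A 0 0‖ := by rw [hfM1, hfM2]
    _ ≤ t + (ε - t) := by linarith
    _ ≤ 1 / (k : ℝ) := by linarith
end

section
/- Let A ∈ ℂ^(k×k) with ‖A − 1_k‖ < 1/k in the Frobenius norm, where k ≥ 2 and r is an index with 2 ≤ r ≤ k and a_{r,1} ≠ 0. Then for any z₂,…,z_k on the unit circle, the point −∑_{ℓ=2}^k (a_{r,ℓ}/a_{r,1}) z_ℓ has modulus strictly greater than 1. -/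
open Finset

theorem stmt14 {k : ℕ} [NeZero k] (hk : 2 ≤ k) (A : Matrix (Fin k) (Fin k) ℂ)
    (hA : frobNorm (A - 1) < 1 / k) (r : Fin k) (hr : r ≠ 0) (hr1 : A r 0 ≠ 0)
    (z : Fin k → ℂ) (hz : ∀ l : Fin k, l ≠ 0 → ‖z l‖ = 1) :
    1 < ‖-∑ l ∈ Finset.univ.erase 0, A r l / A r 0 * z l‖ := by
  have hk0 : (0:ℝ) < (k:ℝ) := by
    have : 0 < k := lt_of_lt_of_le (by norm_num) hk
    exact_mod_cast this
  have hN : ∀ i j, ‖(A - 1) i j‖ ≤ frobNorm (A - 1) := by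
    intro i j
    rw [frobNorm, show ‖(A - 1) i j‖
        = Real.sqrt (‖(A - 1) i j‖ ^ 2) from
      (Real.sqrt_sq (norm_nonneg _)).symm]
    apply Real.sqrt_le_sqrt
    calc ‖(A - 1) i j‖ ^ 2
        ≤ ∑ l, ‖(A - 1) i l‖ ^ 2 :=
          Finset.single_le_sum (f := fun l => ‖(A - 1) i l‖ ^ 2)
            (fun _ _ => sq_nonneg _) (Finset.mem_univ j)
      _ ≤ ∑ r, ∑ l, ‖(A - 1) r l‖ ^ 2 :=
          Finset.single_le_sum (f := fun i => ∑ l, ‖(A - 1) i l‖ ^ 2)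
            (fun _ _ => Finset.sum_nonneg fun _ _ => sq_nonneg _) (Finset.mem_univ i)
  have h0 : ‖A r 0‖ < 1 / k := by
    have := lt_of_le_of_lt (hN r 0) hA
    simpa [Matrix.sub_apply, Matrix.one_apply_ne hr] using this
  have hrr : 1 - 1 / (k:ℝ) < ‖A r r‖ := by
    have h1 := lt_of_le_of_lt (hN r r) hA
    have h2 : ‖A r r - 1‖ < 1 / k := by
      simpa [Matrix.sub_apply, Matrix.one_apply] using h1
    have h3 : ‖(1:ℂ)‖ - ‖A r r‖ ≤ ‖1 - A r r‖ := by
      simpa using norm_sub_norm_le (1 : ℂ) (A r r)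
    rw [show (1 : ℂ) - A r r = -(A r r - 1) by ring, norm_neg] at h3
    simp only [norm_one] at h3
    linarith
  have hl : ∀ l : Fin k, l ≠ r → ‖A r l‖ < 1 / k := by
    intro l hlr
    have := lt_of_le_of_lt (hN r l) hA
    simpa [Matrix.sub_apply, Matrix.one_apply_ne' hlr] using this
  set S := ∑ l ∈ Finset.univ.erase 0, A r l * z l with hSdef
  have hrmem : r ∈ Finset.univ.erase (0 : Fin k) := Finset.mem_erase.2 ⟨hr, Finset.mem_univ r⟩
  have hsplit : S = A r r * z r + ∑ l ∈ (Finset.univ.erase (0:Fin k)).erase r, A r l * z l :=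
    (Finset.add_sum_erase _ _ hrmem).symm
  have hcard : ((Finset.univ.erase (0:Fin k)).erase r).card = k - 2 := by
    rw [Finset.card_erase_of_mem hrmem, Finset.card_erase_of_mem (Finset.mem_univ _),
      Finset.card_univ, Fintype.card_fin]
    omega
  have hrest : ‖∑ l ∈ (Finset.univ.erase (0:Fin k)).erase r, A r l * z l‖
      ≤ ((k:ℝ) - 2) / k := by
    calc ‖∑ l ∈ (Finset.univ.erase (0:Fin k)).erase r, A r l * z l‖
        ≤ ∑ l ∈ (Finset.univ.erase (0:Fin k)).erase r, ‖A r l * z l‖ := by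
          exact norm_sum_le _ _
      _ ≤ ∑ l ∈ (Finset.univ.erase (0:Fin k)).erase r, (1 / (k:ℝ)) := by
          apply Finset.sum_le_sum
          intro l hlmem
          rcases Finset.mem_erase.1 hlmem with ⟨hlr, hl0'⟩
          rcases Finset.mem_erase.1 hl0' with ⟨hl0, _⟩
          rw [norm_mul, hz l hl0, mul_one]
          exact le_of_lt (hl l hlr)
      _ = ((k:ℝ) - 2) / k := by
          rw [Finset.sum_const, hcard, nsmul_eq_mul]
          have : ((k - 2 : ℕ) : ℝ) = (k:ℝ) - 2 := by
            have : (2:ℕ) ≤ k := hk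
            push_cast [Nat.cast_sub this]
            ring
          rw [this]; ring
  have hS : 1 / (k:ℝ) < ‖S‖ := by
    have h1 : ‖A r r * z r‖ = ‖A r r‖ := by
      rw [norm_mul, hz r hr, mul_one]
    set T := ∑ l ∈ (Finset.univ.erase (0:Fin k)).erase r, A r l * z l with hTdef
    have h2 : ‖A r r * z r‖ ≤ ‖S‖ + ‖T‖ := by
      have : A r r * z r = S - T := by rw [hsplit]; ring
      rw [this]
      simpa using norm_sub_le S T
    have hfin : 1 - 1/(k:ℝ) - ((k:ℝ) - 2)/k = 1/k := by field_simp; ring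
    nlinarith [hrr, hrest, h1]
  have habs0 : 0 < ‖A r 0‖ := by
    simpa [norm_pos_iff] using hr1
  have hsum : (∑ l ∈ Finset.univ.erase 0, A r l / A r 0 * z l) = S / A r 0 := by
    rw [hSdef, Finset.sum_div]
    apply Finset.sum_congr rfl
    intro l _
    ring
  rw [norm_neg, hsum, norm_div]
  rw [one_lt_div habs0]
  exact lt_trans h0 hS
end
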